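/- arXiv:0804.0038 — 2 statements merged into one kernel-verified Lean document; each statement's English description precedes it below -/
import Mathlib

section
/- Let d ≥ 2 be an integer, ℓ := lcm(1, …, d), and fix an integer i with 1 ≤ i ≤ d; set ℓ_i := ℓ/i. Let r ≥ 1 and let Φ be an r × r matrix with entries in k̄[t] such that det Φ(θ^{q^{−ih}}) ≠ 0 for every integer h ≥ 1. Then the matrix Φ' := Φ^{(−i(ℓ_i−1))} · Φ^{(−i(ℓ_i−2))} ⋯ Φ^{(−i)} · Φ satisfies det Φ'(θ^{q^{−ℓj}}) ≠ 0 for every integer j ≥ 1; moreover, if det Φ(0) ≠ 0 then det Φ'(0) ≠ 0. -/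
/-!
Setup: `p` a prime, `q = p^e` a power of `p`, and `k̄` an algebraic closure of the rational
function field `𝔽_q(θ)`.  Since `k̄` is perfect, the `q`-power Frobenius is an automorphism
`σ` of `k̄`, and for `m : ℤ` the map `σ^m` sends `x` to `x^{q^m}` (using the inverse of the
Frobenius automorphism when `m < 0`).  For `f ∈ k̄[t]` and `m : ℤ`, `f^{(m)}` is obtained by
applying `σ^m` to each coefficient of `f`, and this operation is applied entrywise to
matrices over `k̄[t]`.
-/

noncomputable section

/-- `k̄`, an algebraic closure of `𝔽_q(θ)` with `q = p^e`. -/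
abbrev Kbar (p e : ℕ) [Fact p.Prime] : Type := AlgebraicClosure (RatFunc (GaloisField p e))

instance (p e : ℕ) [Fact p.Prime] : CharP (RatFunc (GaloisField p e)) p :=
  charP_of_injective_ringHom
    ((algebraMap (Polynomial (GaloisField p e)) (RatFunc (GaloisField p e))).comp
      Polynomial.C).injective p

/-- The `q`-power Frobenius automorphism `σ : x ↦ x^q` of `k̄`, `q = p^e`. -/
def frobQ (p e : ℕ) [Fact p.Prime] : RingAut (Kbar p e) := (frobeniusEquiv (Kbar p e) p) ^ e

/-- `θ ∈ k̄`, the image of the variable of `𝔽_q(θ)`. -/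
def thetaKbar (p e : ℕ) [Fact p.Prime] : Kbar p e :=
  algebraMap (RatFunc (GaloisField p e)) (Kbar p e) RatFunc.X

/-- The `m`-fold coefficientwise Frobenius twist `f ↦ f^{(m)}` on `k̄[t]`, for `m : ℤ`. -/
def polyTwist (p e : ℕ) [Fact p.Prime] (m : ℤ) :
    Polynomial (Kbar p e) →+* Polynomial (Kbar p e) :=
  Polynomial.mapRingHom ((frobQ p e ^ m : RingAut (Kbar p e)) : Kbar p e →+* Kbar p e)

/-!
Since the determinant is multiplicative and commutes with coefficientwise twisting,
`det Φ' = ∏_{a < ℓ_i} (det Φ)^{(-i(ℓ_i-1-a))}`, and evaluating `f^{(m)}` at `x` gives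
`σ^m (f(σ^{-m} x))`. With `ℓ = i ℓ_i`, the `a`-th factor at `θ^{q^{-ℓj}}` is thus a twist of
`det Φ(θ^{q^{-ih}})` with `h = ℓ_i(j-1) + a + 1 ≥ 1`, and at `0` a twist of `det Φ(0)`.
-/

namespace Polynomial

variable {R : Type*} [CommRing R]

theorem eval_map_ringAut_zpow (σ : RingAut R) (m : ℤ) (f : R[X]) (x : R) :
    (f.map ((σ ^ m : RingAut R) : R →+* R)).eval x = (σ ^ m) (f.eval ((σ ^ (-m)) x)) := by
  have hx : x = (σ ^ m) ((σ ^ (-m)) x) := by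
    rw [← RingAut.mul_apply, ← zpow_add, add_neg_cancel, zpow_zero, RingAut.one_apply]
  conv_lhs => rw [hx]
  rw [eval_map]
  exact eval₂_at_apply ((σ ^ m : RingAut R) : R →+* R) _

variable [IsDomain R]

theorem eval_list_prod_map_ringAut_zpow_ne_zero (σ : RingAut R) (f : R[X]) (x : R)
    (ms : List ℤ) (h : ∀ m ∈ ms, f.eval ((σ ^ (-m)) x) ≠ 0) :
    (ms.map fun m => f.map ((σ ^ m : RingAut R) : R →+* R)).prod.eval x ≠ 0 := by
  rw [eval_list_prod, List.map_map]
  refine List.prod_ne_zero fun hmem => ?_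
  obtain ⟨m, hm, hzero⟩ := List.mem_map.1 hmem
  rw [Function.comp_apply, eval_map_ringAut_zpow, map_eq_zero_iff _ (σ ^ m).injective] at hzero
  exact h m hm hzero

/-- The point `σ^{-ijn} θ` seen by the twist `f^{(-i(n-1-a))}` is `σ^{-ih} θ` with
`h = n(j-1) + a + 1 ≥ 1`. -/
theorem eval_twisted_prod_ne_zero (σ : RingAut R) (θ : R) (f : R[X]) (i n : ℕ)
    (hf : ∀ h : ℕ, 1 ≤ h → f.eval ((σ ^ (-(i * h : ℤ))) θ) ≠ 0) (j : ℕ) (hj : 1 ≤ j) :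
    (((List.range n).map fun a : ℕ => -(i * (n - 1 - a) : ℤ)).map fun m =>
        f.map ((σ ^ m : RingAut R) : R →+* R)).prod.eval ((σ ^ (-(i * n * j : ℤ))) θ) ≠ 0 := by
  refine eval_list_prod_map_ringAut_zpow_ne_zero σ f _ _ fun m hm => ?_
  obtain ⟨a, -, rfl⟩ := List.mem_map.1 hm
  obtain ⟨k, rfl⟩ := Nat.exists_eq_add_of_le hj
  have hexp : -(-(i * (n - 1 - a) : ℤ)) + -(i * n * ((1 + k : ℕ) : ℤ)) =
      -(i * (n * k + a + 1 : ℕ)) := by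
    push_cast; ring
  rw [← RingAut.mul_apply, ← zpow_add, hexp]
  exact hf _ (by omega)

end Polynomial

theorem Matrix.det_list_prod_map {n R S ι : Type*} [Fintype n] [DecidableEq n] [CommRing R]
    [CommRing S] (Φ : Matrix n n R) (g : ι → R →+* S) (l : List ι) :
    (l.map fun a => Φ.map (g a)).prod.det = (l.map fun a => g a Φ.det).prod := by
  rw [← coe_detMonoidHom, map_list_prod, List.map_map]
  congr 1
  refine List.map_congr_left fun a _ => ?_
  exact ((g a).map_det Φ).symm

theorem uniformize_frobenius_twists_general (p e : ℕ) [Fact p.Prime]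
    (d : ℕ) (i : ℕ) (hi : 1 ≤ i) (hid : i ≤ d) (r : ℕ)
    (Φ : Matrix (Fin r) (Fin r) (Polynomial (Kbar p e)))
    (hΦ : ∀ h : ℕ, 1 ≤ h →
      Polynomial.eval ((frobQ p e ^ (-(i * h : ℤ))) (thetaKbar p e)) Φ.det ≠ 0) :
    ∀ ℓ ℓi : ℕ, ℓ = (Finset.Icc 1 d).lcm id → ℓi = ℓ / i →
    ∀ Φ' : Matrix (Fin r) (Fin r) (Polynomial (Kbar p e)),
      Φ' = ((List.range ℓi).map
        (fun j => Φ.map (polyTwist p e (-(i * (ℓi - 1 - j) : ℤ))))).prod →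
    (∀ j : ℕ, 1 ≤ j →
        Polynomial.eval ((frobQ p e ^ (-(ℓ * j : ℤ))) (thetaKbar p e)) Φ'.det ≠ 0) ∧
      (Polynomial.eval 0 Φ.det ≠ 0 → Polynomial.eval 0 Φ'.det ≠ 0) := by
  intro ℓ ℓi hℓ hℓi Φ' hΦ'
  have hℓ : ℓ = i * ℓi := by
    rw [hℓi, Nat.mul_div_cancel' (hℓ ▸ Finset.dvd_lcm (Finset.mem_Icc.2 ⟨hi, hid⟩))]
  -- the statement's `List.range ℓi` is coerced to `List ℤ` through the list monad
  have hrange : (do let a ← List.range ℓi; pure (a : ℤ) : List ℤ) = (List.range ℓi).map (↑) :=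
    List.map_eq_flatMap.symm
  have hdet : Φ'.det =
      (((List.range ℓi).map fun a : ℕ => -(i * (ℓi - 1 - a) : ℤ)).map fun m =>
        Φ.det.map ((frobQ p e ^ m : RingAut (Kbar p e)) : Kbar p e →+* Kbar p e)).prod := by
    rw [hΦ', hrange, Matrix.det_list_prod_map, List.map_map, List.map_map]
    rfl
  refine ⟨fun j hj => ?_, fun hΦ0 => ?_⟩
  · rw [hdet, hℓ]
    exact_mod_cast Polynomial.eval_twisted_prod_ne_zero _ _ _ i ℓi hΦ j hj
  · rw [hdet]
    exact Polynomial.eval_list_prod_map_ringAut_zpow_ne_zero _ _ _ _ fun m _ => by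
      rwa [map_zero (frobQ p e ^ (-m))]

/-- Let `d ≥ 2`, `ℓ := lcm(1, …, d)`, `1 ≤ i ≤ d`, `ℓ_i := ℓ/i`.  Let
`Φ` be an `r × r` matrix over `k̄[t]` with `det Φ(θ^{q^{−ih}}) ≠ 0` for every `h ≥ 1`.  Then
`Φ' := Φ^{(−i(ℓ_i−1))} ⋯ Φ^{(−i)} · Φ` satisfies `det Φ'(θ^{q^{−ℓj}}) ≠ 0` for every
`j ≥ 1`; moreover, if `det Φ(0) ≠ 0` then `det Φ'(0) ≠ 0`. -/
theorem uniformize_frobenius_twists (p e : ℕ) [Fact p.Prime] (he : 0 < e)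
    (d : ℕ) (hd : 2 ≤ d) (i : ℕ) (hi : 1 ≤ i) (hid : i ≤ d) (r : ℕ) (hr : 1 ≤ r)
    (Φ : Matrix (Fin r) (Fin r) (Polynomial (Kbar p e)))
    (hΦ : ∀ h : ℕ, 1 ≤ h →
      Polynomial.eval ((frobQ p e ^ (-(i * h : ℤ))) (thetaKbar p e)) Φ.det ≠ 0) :
    ∀ ℓ ℓi : ℕ, ℓ = (Finset.Icc 1 d).lcm id → ℓi = ℓ / i →
    ∀ Φ' : Matrix (Fin r) (Fin r) (Polynomial (Kbar p e)),
      Φ' = ((List.range ℓi).map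
        (fun j => Φ.map (polyTwist p e (-(i * (ℓi - 1 - j) : ℤ))))).prod →
    (∀ j : ℕ, 1 ≤ j →
        Polynomial.eval ((frobQ p e ^ (-(ℓ * j : ℤ))) (thetaKbar p e)) Φ'.det ≠ 0) ∧
      (Polynomial.eval 0 Φ.det ≠ 0 → Polynomial.eval 0 Φ'.det ≠ 0) :=
  uniformize_frobenius_twists_general p e d i hi hid r Φ hΦ
end
end

section
/- In the formal power series ring 𝔽_p(θ)[[z]], the Carlitz exponential satisfies the functional equation exp_{C_r}(θ·z) = θ·exp_{C_r}(z) + (exp_{C_r}(z))^{p^r}, where exp_{C_r}(θ·z) denotes the power series obtained from exp_{C_r}(z) by substituting θ·z for z. -/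
/-!
Setup: `p` a prime, `r` a positive integer, `k := 𝔽_p(θ)` the field of rational functions
in `θ` over `𝔽_p` (realized as `RatFunc (ZMod p)` with `θ := X`).  With
`D_{r0} := 1` and `D_{ri} := ∏_{j=0}^{i−1} (θ^{p^{ri}} − θ^{p^{rj}})`, the Carlitz
exponential is the formal power series `exp_{C_r}(z) := Σ_{i=0}^∞ z^{p^{ri}}/D_{ri} ∈ k[[z]]`.
-/

noncomputable section

open scoped Classical

/-- `k := 𝔽_p(θ)`. -/
abbrev kRat (p : ℕ) [Fact p.Prime] : Type := RatFunc (ZMod p)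

/-- `θ`, the variable of `k = 𝔽_p(θ)`. -/
def thetaRat (p : ℕ) [Fact p.Prime] : kRat p := RatFunc.X

/-- `D_{r0} := 1`, `D_{ri} := ∏_{j=0}^{i−1} (θ^{p^{ri}} − θ^{p^{rj}})`. -/
def carlitzD (p : ℕ) [Fact p.Prime] (r i : ℕ) : kRat p :=
  ∏ j ∈ Finset.range i, (thetaRat p ^ p ^ (r * i) - thetaRat p ^ p ^ (r * j))

/-- The Carlitz exponential `exp_{C_r}(z) := Σ_{i=0}^∞ z^{p^{ri}}/D_{ri} ∈ k[[z]]`: its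
coefficient of `z^j` is `1/D_{ri}` when `j = p^{ri}`, and `0` otherwise. -/
def carlitzExp (p : ℕ) [Fact p.Prime] (r : ℕ) : PowerSeries (kRat p) :=
  PowerSeries.mk fun j => if h : ∃ i, p ^ (r * i) = j then (carlitzD p r h.choose)⁻¹ else 0

/-!
Compare coefficients. With `q = p ^ r`, the `q`-th power map in characteristic `p` raises each
coefficient to the `q`-th power and moves it from degree `n` to degree `q * n`. Hence both sides
are supported on the degrees `q ^ i`, and in degree `q ^ (i + 1)` the equation is the recursion
`D_{i+1} = (θ^{q^{i+1}} - θ) * D_i ^ q`, obtained by applying the Frobenius to the product `D_i`.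
-/

namespace PowerSeries

theorem coeff_pow_expChar_pow {R : Type*} [CommRing R] (p : ℕ) [ExpChar R p]
    (f : PowerSeries R) (k n : ℕ) :
    coeff n (f ^ p ^ k) = if p ^ k ∣ n then coeff (n / p ^ k) f ^ p ^ k else 0 := by
  have hp : p ^ k ≠ 0 := pow_ne_zero k (expChar_ne_zero R p)
  rw [← MvPowerSeries.map_iterateFrobenius_expand p (expChar_ne_zero R p) f k]
  change coeff n (map (iterateFrobenius R p k) (expand (p ^ k) hp f)) = _
  rw [coeff_map, coeff_expand, apply_ite (iterateFrobenius R p k), map_zero,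
    iterateFrobenius_def]

end PowerSeries

theorem Nat.pow_mul_right_injective {p r : ℕ} (hp : 2 ≤ p) (hr : 0 < r) :
    Function.Injective fun i : ℕ => p ^ (r * i) := by
  simpa only [pow_mul] using Nat.pow_right_injective (Nat.one_lt_pow hr.ne' hp)

theorem RatFunc.X_pow_injective (K : Type*) [Field K] :
    Function.Injective fun n : ℕ => (RatFunc.X : RatFunc K) ^ n := by
  intro a b h
  simp only [← RatFunc.algebraMap_X, ← map_pow, Polynomial.X_pow_eq_monomial] at h
  exact (Polynomial.monomial_left_inj one_ne_zero).mp (RatFunc.algebraMap_injective K h)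

open PowerSeries

section Carlitz

variable {p : ℕ} [Fact p.Prime] {r : ℕ}

theorem carlitzD_ne_zero (hr : 0 < r) (i : ℕ) : carlitzD p r i ≠ 0 :=
  Finset.prod_ne_zero_iff.mpr fun _ hj => sub_ne_zero.mpr fun h =>
    (Finset.mem_range.mp hj).ne' <|
      Nat.pow_mul_right_injective (Fact.out : p.Prime).two_le hr (RatFunc.X_pow_injective _ h)

theorem carlitzD_succ (i : ℕ) :
    carlitzD p r (i + 1) =
      (thetaRat p ^ p ^ (r * (i + 1)) - thetaRat p) * carlitzD p r i ^ p ^ r := by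
  rw [carlitzD, Finset.prod_range_succ', carlitzD, ← Finset.prod_pow, mul_comm]
  congr 1
  · simp
  · refine Finset.prod_congr rfl fun j _ => ?_
    rw [sub_pow_char_pow, ← pow_mul, ← pow_mul, ← pow_add, ← pow_add]
    ring_nf

theorem thetaRat_pow_mul_inv_carlitzD_succ (hr : 0 < r) (i : ℕ) :
    thetaRat p ^ p ^ (r * (i + 1)) * (carlitzD p r (i + 1))⁻¹ =
      thetaRat p * (carlitzD p r (i + 1))⁻¹ + (carlitzD p r i)⁻¹ ^ p ^ r := by
  have h := carlitzD_ne_zero (p := p) hr (i + 1)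
  rw [carlitzD_succ] at h ⊢
  rw [inv_pow, ← sub_eq_iff_eq_add', ← sub_mul, mul_inv, ← mul_assoc,
    mul_inv_cancel₀ (left_ne_zero_of_mul h), one_mul]

theorem coeff_carlitzExp_pow (hr : 0 < r) (i : ℕ) :
    coeff (p ^ (r * i)) (carlitzExp p r) = (carlitzD p r i)⁻¹ := by
  have h : ∃ j, p ^ (r * j) = p ^ (r * i) := ⟨i, rfl⟩
  rw [carlitzExp, coeff_mk, dif_pos h,
    Nat.pow_mul_right_injective (Fact.out : p.Prime).two_le hr h.choose_spec]

theorem coeff_carlitzExp_of_forall_ne {n : ℕ} (h : ∀ i, p ^ (r * i) ≠ n) :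
    coeff n (carlitzExp p r) = 0 := by
  rw [carlitzExp, coeff_mk, dif_neg (not_exists.mpr h)]

theorem coeff_carlitzExp_pow_pow_succ (hr : 0 < r) (i : ℕ) :
    coeff (p ^ (r * (i + 1))) (carlitzExp p r ^ p ^ r) = (carlitzD p r i)⁻¹ ^ p ^ r := by
  rw [coeff_pow_expChar_pow, mul_add_one, pow_add, if_pos (dvd_mul_left _ _),
    Nat.mul_div_cancel _ (pow_pos (Fact.out : p.Prime).pos r), coeff_carlitzExp_pow hr]

theorem coeff_carlitzExp_pow_pow_of_forall_ne {n : ℕ} (h : ∀ i, p ^ (r * (i + 1)) ≠ n) :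
    coeff n (carlitzExp p r ^ p ^ r) = 0 := by
  rw [coeff_pow_expChar_pow]
  split_ifs with hdvd
  · rw [coeff_carlitzExp_of_forall_ne fun i hi => h i ?_,
      zero_pow (pow_ne_zero _ (Fact.out : p.Prime).ne_zero)]
    rw [mul_add_one, pow_add, hi, Nat.div_mul_cancel hdvd]
  · rfl

end Carlitz

/-- In `𝔽_p(θ)[[z]]`, the Carlitz exponential satisfies the functional
equation `exp_{C_r}(θ·z) = θ·exp_{C_r}(z) + (exp_{C_r}(z))^{p^r}`, where `exp_{C_r}(θ·z)`
is obtained by substituting `θ·z` for `z` (i.e. rescaling by `θ`). -/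
theorem carlitzExp_functional_equation (p : ℕ) [Fact p.Prime] (r : ℕ) (hr : 0 < r) :
    PowerSeries.rescale (thetaRat p) (carlitzExp p r) =
      PowerSeries.C (R := kRat p) (thetaRat p) * carlitzExp p r + carlitzExp p r ^ p ^ r := by
  have hinj := Nat.pow_mul_right_injective (Fact.out : p.Prime).two_le hr
  ext n
  rw [coeff_rescale, map_add, coeff_C_mul]
  by_cases h : ∃ i, p ^ (r * i) = n
  · obtain ⟨_ | i, rfl⟩ := h
    · rw [coeff_carlitzExp_pow hr,
        coeff_carlitzExp_pow_pow_of_forall_ne fun i => hinj.ne i.succ_ne_zero]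
      simp [carlitzD]
    · rw [coeff_carlitzExp_pow hr, coeff_carlitzExp_pow_pow_succ hr]
      exact thetaRat_pow_mul_inv_carlitzD_succ hr i
  · rw [not_exists] at h
    rw [coeff_carlitzExp_of_forall_ne h, coeff_carlitzExp_pow_pow_of_forall_ne fun i => h (i + 1)]
    simp
end
end
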